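/- Let n, k ∈ ℕ with k < n, let H ⊆ ℝ with |H| ≥ n, and let ω = (ω₁, …, ω_n) : H → ℝⁿ be such that ω_{⟨k+1⟩} has nonvanishing determinants Φ_{ω_{⟨k+1⟩}} on pairwise distinct arguments. Then for pairwise distinct x₁, …, x_n ∈ H the following identity holds: Φ_ω(x₁, …, x_n) · (Φ_{ω_{⟨k⟩}}(x₁, …, x_k))^{n−k−1} / ∏_{j=k+1}^{n} Φ_{ω_{⟨k+1⟩}}(x₁, …, x_k, x_j) equals the determinant of the (n−k)×(n−k) matrix whose (i,j) entry (for i, j ∈ {k+1, …, n}) is [x₁, …, x_k, x_j; ω_i]_{ω_{⟨k+1⟩}}. -/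

import Mathlib

/-!
Split `B = (ω_i(x_j))` into blocks after the first `k` rows and columns, with leading corner `K`.
The numerator of `[x₁,…,x_k,x_j; ω_i]` is the minor of `B` obtained by bordering `K` with row `i`
and column `j`, and the denominators are these minors for `i = k+1`; so after dividing column by
column the identity is Sylvester's `det (bordered minors of B) = det B · (det K)^{n-k-1}`.
When `K` is invertible, each bordered minor is `det K` times an entry of the Schur complement `S`
of `K`, and `det B = det K · det S`. In general, replace `B` by `B + X·1` over `R[X]`: its corner
determinant is a monic polynomial, hence a unit in a localization into which `R[X]` embeds, and
evaluating at `X = 0` returns the identity for `B`.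
-/

/-- `Φ_ω(x₁,…,x_m) = det(ω_i(x_j))`. -/
noncomputable def Phi {m : ℕ} (ω : Fin m → ℝ → ℝ) (x : Fin m → ℝ) : ℝ :=
  Matrix.det (Matrix.of fun i j => ω i (x j))

/-- `ω` is an `m`-dimensional positive Chebyshev system over `H`. -/
def IsPosChebyshev {m : ℕ} (ω : Fin m → ℝ → ℝ) (H : Set ℝ) : Prop :=
  ∀ x : Fin m → ℝ, (∀ i, x i ∈ H) → StrictMono x → 0 < Phi ω x

/-- `f` is convex with respect to the `m`-dimensional system `ω` on `S`. -/
def IsConvexWRT {m : ℕ} (ω : Fin m → ℝ → ℝ) (S : Set ℝ) (f : ℝ → ℝ) : Prop :=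
  ∀ x : Fin (m + 1) → ℝ, (∀ i, x i ∈ S) → StrictMono x → 0 ≤ Phi (Fin.snoc ω f) x

/-- The generalized divided difference `[x₁,…,x_k; f]_{ω⟨k⟩}`:
the numerator replaces the last function `ω_k` by `f`. -/
noncomputable def divDiff {k : ℕ} (ω : Fin k → ℝ → ℝ) (f : ℝ → ℝ) (x : Fin k → ℝ) : ℝ :=
  Phi (fun i => if (i : ℕ) + 1 = k then f else ω i) x / Phi ω x

open scoped Polynomial

namespace Matrix

variable {R : Type*} [CommRing R] {κ μ : Type*}

def bordered {α : Type*} (B : Matrix (κ ⊕ μ) (κ ⊕ μ) α) (i j : μ) :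
    Matrix (κ ⊕ Fin 1) (κ ⊕ Fin 1) α :=
  B.submatrix (Sum.map id fun _ => i) (Sum.map id fun _ => j)

variable [Fintype κ] [DecidableEq κ]

def borderedMinors (B : Matrix (κ ⊕ μ) (κ ⊕ μ) R) : Matrix μ μ R :=
  of fun i j => (B.bordered i j).det

theorem det_bordered_of_invertible (B : Matrix (κ ⊕ μ) (κ ⊕ μ) R) [Invertible B.toBlocks₁₁]
    (i j : μ) :
    (B.bordered i j).det = B.toBlocks₁₁.det *
      (B.toBlocks₂₂ - B.toBlocks₂₁ * ⅟B.toBlocks₁₁ * B.toBlocks₁₂) i j := by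
  rw [← fromBlocks_toBlocks (B.bordered i j)]
  change (fromBlocks B.toBlocks₁₁ _ _ _).det = _
  rw [det_fromBlocks₁₁, det_fin_one]
  simp [mul_apply, bordered, toBlocks₁₂, toBlocks₂₁, toBlocks₂₂]

theorem borderedMinors_map {S : Type*} [CommRing S] (f : R →+* S)
    (B : Matrix (κ ⊕ μ) (κ ⊕ μ) R) : (B.map f).borderedMinors = B.borderedMinors.map f := by
  ext i j
  simp [borderedMinors, bordered, RingHom.map_det, submatrix_map]

variable [Fintype μ] [DecidableEq μ] [Nonempty μ]

theorem det_borderedMinors_of_isUnit (B : Matrix (κ ⊕ μ) (κ ⊕ μ) R)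
    (hK : IsUnit B.toBlocks₁₁.det) :
    B.borderedMinors.det = B.det * B.toBlocks₁₁.det ^ (Fintype.card μ - 1) := by
  let _ := B.toBlocks₁₁.invertibleOfIsUnitDet hK
  set S := B.toBlocks₂₂ - B.toBlocks₂₁ * ⅟B.toBlocks₁₁ * B.toBlocks₁₂
  have hminors : B.borderedMinors = B.toBlocks₁₁.det • S := by
    ext i j
    exact det_bordered_of_invertible B i j
  have hschur : B.det = B.toBlocks₁₁.det * S.det := by
    conv_lhs => rw [← fromBlocks_toBlocks B]
    exact det_fromBlocks₁₁ ..
  obtain ⟨m, hm⟩ := Nat.exists_eq_succ_of_ne_zero (Fintype.card_ne_zero (α := μ))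
  rw [hminors, det_smul, hschur, hm, Nat.succ_sub_one, pow_succ]
  ring

theorem det_borderedMinors (B : Matrix (κ ⊕ μ) (κ ⊕ μ) R) :
    B.borderedMinors.det = B.det * B.toBlocks₁₁.det ^ (Fintype.card μ - 1) := by
  set P := charmatrix (-B)
  have hcorner : P.toBlocks₁₁ = charmatrix (-B.toBlocks₁₁) := by
    ext s t
    by_cases h : s = t <;> simp [P, toBlocks₁₁, h]
  have hmonic : P.toBlocks₁₁.det.Monic := hcorner ▸ charpoly_monic _
  let L := Localization.Away P.toBlocks₁₁.det
  have hinj : Function.Injective (algebraMap R[X] L) :=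
    IsLocalization.injective L (Submonoid.powers_le.2 hmonic.mem_nonZeroDivisors)
  have hP : P.borderedMinors.det = P.det * P.toBlocks₁₁.det ^ (Fintype.card μ - 1) := by
    apply hinj
    simp only [map_mul, map_pow, RingHom.map_det, RingHom.mapMatrix_apply, ← borderedMinors_map]
    refine det_borderedMinors_of_isUnit (P.map (algebraMap R[X] L)) ?_
    have hunit := IsLocalization.Away.algebraMap_isUnit (S := L) P.toBlocks₁₁.det
    rwa [RingHom.map_det] at hunit
  have heval : P.map (Polynomial.evalRingHom 0) = B := by
    ext s t
    by_cases h : s = t <;> simp [P, h]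
  have := congrArg (Polynomial.evalRingHom 0) hP
  simp only [map_mul, map_pow, RingHom.map_det, RingHom.mapMatrix_apply,
    ← borderedMinors_map] at this
  exact heval ▸ this

end Matrix

theorem Phi_eq_det_submatrix {ι : Type*} {m : ℕ} (ω : ι → ℝ → ℝ) (x : ι → ℝ)
    (r c : Fin m → ι) :
    Phi (fun i => ω (r i)) (fun j => x (c j))
      = ((Matrix.of fun i j => ω i (x j)).submatrix r c).det :=
  rfl

def borderIndex {n k : ℕ} (hk : k ≤ n) (j : Fin (n - k)) : Fin (k + 1) → Fin n :=
  Fin.snoc (Fin.castLE hk) ⟨k + j, by omega⟩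

@[simp]
theorem borderIndex_castSucc {n k : ℕ} (hk : k ≤ n) (j : Fin (n - k)) (t : Fin k) :
    borderIndex hk j t.castSucc = Fin.castLE hk t :=
  Fin.snoc_castSucc ..

@[simp]
theorem borderIndex_last {n k : ℕ} (hk : k ≤ n) (j : Fin (n - k)) :
    borderIndex hk j (Fin.last k) = ⟨k + j, by omega⟩ :=
  Fin.snoc_last ..

theorem det_submatrix_borderIndex {R : Type*} [CommRing R] {n k : ℕ} (hk : k ≤ n)
    (A : Matrix (Fin n) (Fin n) R) (i j : Fin (n - k)) :
    (A.submatrix (borderIndex hk i) (borderIndex hk j)).det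
      = (A.submatrix (finSumFinEquiv.trans (finCongr (Nat.add_sub_cancel' hk)))
          (finSumFinEquiv.trans (finCongr (Nat.add_sub_cancel' hk)))).borderedMinors i j := by
  rw [← Matrix.det_submatrix_equiv_self finSumFinEquiv, Matrix.submatrix_submatrix]
  simp only [Matrix.borderedMinors, Matrix.bordered, Matrix.of_apply, Matrix.submatrix_submatrix]
  congr 2 <;> funext s <;> rcases s with s | s <;> ext <;> simp [borderIndex, Fin.snoc]

theorem Matrix.det_of_div_col {K m : Type*} [Field K] [Fintype m] [DecidableEq m]
    (M : Matrix m m K) (d : m → K) :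
    (Matrix.of fun i j => M i j / d j).det = M.det / ∏ j, d j := by
  simp only [div_eq_mul_inv, mul_comm (M _ _), Matrix.det_mul_row, Finset.prod_inv_distrib]
  ring

/-- The Sylvester-type identity \eqref{id} for generalized divided differences:
`Φ_ω(x₁,…,x_n) · (Φ_{ω⟨k⟩}(x₁,…,x_k))^{n-k-1} / ∏_{j=k+1}^n Φ_{ω⟨k+1⟩}(x₁,…,x_k,x_j)`
equals the determinant of the matrix with entries `[x₁,…,x_k,x_j; ω_i]_{ω⟨k+1⟩}`
for `i, j ∈ {k+1,…,n}`. -/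
theorem sylvester_divided_difference_identity (n k : ℕ) (hk : k < n)
    (ω : Fin n → ℝ → ℝ)
    (x : Fin n → ℝ) :
    Phi ω x *
        (Phi (fun i : Fin k => ω (Fin.castLE (by omega) i))
          (fun i : Fin k => x (Fin.castLE (by omega) i))) ^ (n - k - 1) /
      ∏ j : Fin (n - k),
        Phi (fun i : Fin (k + 1) => ω (Fin.castLE hk i))
          (Fin.snoc (fun i : Fin k => x (Fin.castLE (by omega) i))
            (x ⟨k + (j : ℕ), by have := j.isLt; omega⟩))
    = Matrix.det (Matrix.of fun i j : Fin (n - k) =>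
        divDiff (fun t : Fin (k + 1) => ω (Fin.castLE hk t))
          (ω ⟨k + (i : ℕ), by have := i.isLt; omega⟩)
          (Fin.snoc (fun t : Fin k => x (Fin.castLE (by omega) t))
            (x ⟨k + (j : ℕ), by have := j.isLt; omega⟩))) := by
  set A : Matrix (Fin n) (Fin n) ℝ := Matrix.of fun i j => ω i (x j)
  set e : Fin k ⊕ Fin (n - k) ≃ Fin n :=
    finSumFinEquiv.trans (finCongr (Nat.add_sub_cancel' hk.le))
  set B := A.submatrix e e
  have : Nonempty (Fin (n - k)) := ⟨⟨0, by omega⟩⟩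
  have hfull : Phi ω x = B.det := (Matrix.det_submatrix_equiv_self _ A).symm
  have hcorner : Phi (fun i : Fin k => ω (Fin.castLE hk.le i))
      (fun i : Fin k => x (Fin.castLE hk.le i)) = B.toBlocks₁₁.det := rfl
  have hcols : ∀ j : Fin (n - k), Fin.snoc (fun t : Fin k => x (Fin.castLE hk.le t))
      (x ⟨k + j, by omega⟩) = fun t => x (borderIndex hk.le j t) :=
    fun j => (Fin.comp_snoc x _ _).symm
  have hrows : ∀ i : Fin (n - k), (fun t : Fin (k + 1) =>
      if (t : ℕ) + 1 = k + 1 then ω ⟨k + i, by omega⟩ else ω (Fin.castLE hk t))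
      = fun t => ω (borderIndex hk.le i t) := by
    intro i
    funext t
    refine Fin.lastCases ?_ (fun t => ?_) t <;> simp [t.isLt.ne]
  have hden : (fun t : Fin (k + 1) => ω (Fin.castLE hk t))
      = fun t => ω (borderIndex hk.le ⟨0, by omega⟩ t) := by
    funext t
    congr 1
    refine Fin.lastCases (Fin.ext ?_) (fun t => Fin.ext ?_) t <;> simp
  simp only [divDiff, hrows, hden, hcols, hfull, hcorner, Phi_eq_det_submatrix,
    det_submatrix_borderIndex, Matrix.det_of_div_col, Matrix.det_borderedMinors, Fintype.card_fin]
  rfl
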